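/- Every continuous function from the ordinal space [0, ω₁) (ordinals below the first uncountable ordinal, with the order topology) to ℝ is eventually constant. -/

import Mathlib

/-!
If beyond every point a continuous `f` still moved by more than `ε`, repeatedly jumping to such
a point would give an increasing sequence whose image is not Cauchy; but in `[0, ω₁)` every
increasing sequence converges to its supremum, because `ω₁` has uncountable cofinality. Hence for
each `ε = 1 / (n + 1)` there is a point beyond which `f` moves by at most `ε`, and `f` is constant
beyond an upper bound of these countably many points.
-/

open Cardinal Set Filter Topology

section

variable {α β : Type*} [Preorder α] [MetricSpace β]

theorem exists_forall_ge_dist_le_of_continuous [TopologicalSpace α] [Nonempty α]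
    (hconv : ∀ x : ℕ → α, Monotone x → ∃ l, Tendsto x atTop (𝓝 l))
    {f : α → β} (hf : Continuous f) {ε : ℝ} (hε : 0 < ε) :
    ∃ a, ∀ b, a ≤ b → dist (f b) (f a) ≤ ε := by
  by_contra! h
  choose g hg_ge hg_dist using h
  set x : ℕ → α := fun n => g^[n] (Classical.arbitrary α)
  have hx_succ (n : ℕ) : x (n + 1) = g (x n) := Function.iterate_succ_apply' g n _
  have hx : Monotone x := monotone_nat_of_le_succ fun n => hx_succ n ▸ hg_ge (x n)
  obtain ⟨l, hl⟩ := hconv x hx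
  obtain ⟨N, hN⟩ := Metric.cauchySeq_iff'.mp ((hf.tendsto l).comp hl).cauchySeq ε hε
  have hclose : dist (f (g (x N))) (f (x N)) < ε := hx_succ N ▸ hN (N + 1) N.le_succ
  exact (hg_dist (x N)).not_gt hclose

theorem exists_forall_ge_eq_of_forall_dist_le (hbdd : ∀ x : ℕ → α, BddAbove (range x))
    {f : α → β} (h : ∀ ε > 0, ∃ a, ∀ b, a ≤ b → dist (f b) (f a) ≤ ε) :
    ∃ a, ∀ b, a ≤ b → f b = f a := by
  choose a ha using fun n : ℕ => h (1 / (n + 1)) Nat.one_div_pos_of_nat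
  obtain ⟨c, hc⟩ := hbdd a
  refine ⟨c, fun b hcb => eq_of_forall_dist_le fun ε hε => ?_⟩
  obtain ⟨n, hn⟩ := exists_nat_one_div_lt (half_pos hε)
  have han : a n ≤ c := hc (mem_range_self n)
  calc dist (f b) (f c) ≤ dist (f b) (f (a n)) + dist (f c) (f (a n)) := dist_triangle_right _ _ _
    _ ≤ 1 / (n + 1) + 1 / (n + 1) := add_le_add (ha n b (han.trans hcb)) (ha n c han)
    _ ≤ ε := by linarith

end

namespace Ordinal

variable {o : Ordinal}

theorem iSup_nat_lt_of_aleph0_lt_cof (ho : ℵ₀ < o.cof) {x : ℕ → Ordinal} (hx : ∀ n, x n < o) :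
    ⨆ n, x n < o :=
  lift_iSup_lt_of_lt_cof (by simpa using ho) hx

theorem nonempty_Iio_of_aleph0_lt_cof (ho : ℵ₀ < o.cof) : Nonempty (Iio o) :=
  ⟨⟨0, pos_iff_ne_zero.mpr fun h : o = 0 => by simp [h] at ho⟩⟩

theorem bddAbove_range_Iio_of_aleph0_lt_cof (ho : ℵ₀ < o.cof) (x : ℕ → Iio o) :
    BddAbove (range x) :=
  ⟨⟨⨆ n, (x n : Ordinal), iSup_nat_lt_of_aleph0_lt_cof ho fun n => (x n).2⟩,
    forall_mem_range.mpr fun n => le_ciSup bddAbove_of_small n⟩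

theorem exists_tendsto_of_monotone_Iio_of_aleph0_lt_cof (ho : ℵ₀ < o.cof)
    (x : ℕ → Iio o) (hx : Monotone x) : ∃ l, Tendsto x atTop (𝓝 l) :=
  ⟨⟨⨆ n, (x n : Ordinal), iSup_nat_lt_of_aleph0_lt_cof ho fun n => (x n).2⟩,
    IsInducing.subtypeVal.tendsto_nhds_iff.mpr <|
      tendsto_atTop_ciSup ((Subtype.mono_coe _).comp hx) bddAbove_of_small⟩

end Ordinal

/-- Every continuous function from `[0, ω₁)` to `ℝ` is eventually constant. -/
theorem continuous_omega1_eventually_constant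
    (f : (Set.Iio (Cardinal.aleph 1).ord : Set Ordinal) → ℝ) (hf : Continuous f) :
    ∃ a : (Set.Iio (Cardinal.aleph 1).ord : Set Ordinal),
      ∀ b : (Set.Iio (Cardinal.aleph 1).ord : Set Ordinal), a ≤ b → f b = f a := by
  have hcof : ℵ₀ < (aleph 1).ord.cof := by
    rw [isRegular_aleph_one.cof_ord]
    exact aleph0_lt_aleph_one
  have := Ordinal.nonempty_Iio_of_aleph0_lt_cof hcof
  exact exists_forall_ge_eq_of_forall_dist_le
    (Ordinal.bddAbove_range_Iio_of_aleph0_lt_cof hcof) fun _ hε =>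
      exists_forall_ge_dist_le_of_continuous
        (Ordinal.exists_tendsto_of_monotone_Iio_of_aleph0_lt_cof hcof) hf hε
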